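/- Let T be a proper trunk in a combinatorial code C (T ≠ C). Then T, considered as a code, has strictly fewer trunks than C. -/

import Mathlib

/-- The trunk of `σ` in the code `C`. -/
def Tk {n : ℕ} (C : Set (Finset (Fin n))) (σ : Finset (Fin n)) : Set (Finset (Fin n)) :=
  {c ∈ C | σ ⊆ c}

/-- `T` is a trunk in the code `C`. -/
def IsTrunk {n : ℕ} (C T : Set (Finset (Fin n))) : Prop :=
  T = ∅ ∨ ∃ σ, T = Tk C σ

section Trunk

variable {n : ℕ} {C T S : Set (Finset (Fin n))}

theorem Tk_subset (C : Set (Finset (Fin n))) (σ : Finset (Fin n)) : Tk C σ ⊆ C :=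
  fun _ hc => hc.1

theorem self_mem_Tk {c : Finset (Fin n)} (hc : c ∈ C) : c ∈ Tk C c :=
  ⟨hc, subset_rfl⟩

theorem Tk_empty (σ : Finset (Fin n)) : Tk (∅ : Set (Finset (Fin n))) σ = ∅ :=
  Set.eq_empty_of_forall_notMem fun _ hc => hc.1

theorem Tk_Tk (C : Set (Finset (Fin n))) (σ τ : Finset (Fin n)) :
    Tk (Tk C σ) τ = Tk C (σ ∪ τ) := by
  ext c
  simp only [Tk, Set.mem_ofPred_eq, Finset.union_subset_iff, and_assoc]

theorem IsTrunk.subset (hT : IsTrunk C T) : T ⊆ C := by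
  rcases hT with rfl | ⟨σ, rfl⟩
  · exact Set.empty_subset C
  · exact Tk_subset C σ

theorem IsTrunk.trans (hT : IsTrunk C T) (hS : IsTrunk T S) : IsTrunk C S := by
  rcases hS with rfl | ⟨τ, rfl⟩
  · exact Or.inl rfl
  rcases hT with rfl | ⟨σ, rfl⟩
  · exact Or.inl (Tk_empty τ)
  · exact Or.inr ⟨σ ∪ τ, Tk_Tk C σ τ⟩

theorem not_isTrunk_Tk_of_mem_diff {c : Finset (Fin n)} (hc : c ∈ C \ T) :
    ¬IsTrunk T (Tk C c) :=
  fun h => hc.2 (h.subset (self_mem_Tk hc.1))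

theorem setOf_isTrunk_ssubset (hT : IsTrunk C T) (hne : T ≠ C) :
    {S | IsTrunk T S} ⊂ {S | IsTrunk C S} := by
  obtain ⟨c, hc⟩ := Set.nonempty_of_ssubset (hT.subset.ssubset_of_ne hne)
  exact Set.ssubset_iff_of_subset (fun _ hS => hT.trans hS) |>.mpr
    ⟨Tk C c, Or.inr ⟨c, rfl⟩, not_isTrunk_Tk_of_mem_diff hc⟩

end Trunk

/-- A proper trunk `T` of a code `C`, considered itself as a code, has strictly fewer trunks
than `C`. -/
theorem proper_trunk_fewer_trunks {n : ℕ} (C T : Set (Finset (Fin n)))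
    (hT : IsTrunk C T) (hne : T ≠ C) :
    {S | IsTrunk T S}.ncard < {S | IsTrunk C S}.ncard :=
  Set.ncard_lt_ncard (setOf_isTrunk_ssubset hT hne) (Set.toFinite _)
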